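/- arXiv:2211.15939 — 2 statements merged into one kernel-verified Lean document; each statement's English description precedes it below -/
import Mathlib

section
/- Let M be a real m×n matrix with m < n such that M Mᵀ is invertible, let M† = Mᵀ (M Mᵀ)⁻¹ be its Moore–Penrose pseudoinverse, and fix y ∈ ℝ^m and a real number η with 0 ≤ η ≤ 2. Then the affine map f_LE : ℝ^n → ℝ^n defined by f_LE(h) = h + η M†(y − M h) is Lipschitz continuous with Lipschitz constant 1 with respect to the Euclidean norm: ‖f_LE(h₁) − f_LE(h₂)‖₂ ≤ ‖h₁ − h₂‖₂ for all h₁, h₂ ∈ ℝ^n. -/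
open Matrix
open scoped InnerProductSpace

/-- The pseudo-inverse linear estimator `f_LE(h) = h + η M†(y − M h)` with
`M† = Mᵀ (M Mᵀ)⁻¹` and `0 ≤ η ≤ 2` is `1`-Lipschitz with respect to the Euclidean norm. -/
theorem linear_estimator_lipschitz_one {m n : ℕ} (hmn : m < n)
    (M : Matrix (Fin m) (Fin n) ℝ) (hinv : IsUnit (M * Mᵀ))
    (y : EuclideanSpace ℝ (Fin m)) (η : ℝ) (hη0 : 0 ≤ η) (hη2 : η ≤ 2)
    (fLE : EuclideanSpace ℝ (Fin n) → EuclideanSpace ℝ (Fin n))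
    (hfLE : ∀ h, fLE h = h + η • (Matrix.toEuclideanLin (Mᵀ * (M * Mᵀ)⁻¹)
        (y - Matrix.toEuclideanLin M h))) :
    ∀ h₁ h₂ : EuclideanSpace ℝ (Fin n), ‖fLE h₁ - fLE h₂‖ ≤ ‖h₁ - h₂‖ := by
  intro h₁ h₂
  set B := (M * Mᵀ)⁻¹ with hB
  have hdet : IsUnit (M * Mᵀ).det := (Matrix.isUnit_iff_isUnit_det _).mp hinv
  have hBl : B * (M * Mᵀ) = 1 := Matrix.nonsing_inv_mul _ hdet
  have hBr : (M * Mᵀ) * B = 1 := Matrix.mul_nonsing_inv _ hdet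
  have hBsymm : Bᵀ = B := by
    rw [hB, Matrix.transpose_nonsing_inv, Matrix.transpose_mul, Matrix.transpose_transpose]
  set Q := Mᵀ * B * M with hQ
  have hQsymm : Qᵀ = Q := by
    rw [hQ, Matrix.transpose_mul, Matrix.transpose_mul, Matrix.transpose_transpose, hBsymm,
      Matrix.mul_assoc]
  have hMQ : M * Q = M := by
    rw [hQ, ← Matrix.mul_assoc, ← Matrix.mul_assoc, hBr, Matrix.one_mul]
  have hQQ : Q * Q = Q := by
    calc Q * Q = Mᵀ * B * (M * Q) := by rw [Matrix.mul_assoc]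
    _ = Q := by rw [hMQ]
  set L := Matrix.toEuclideanLin Q with hL
  have hQH : Qᴴ = Q := by
    rw [Matrix.conjTranspose_eq_transpose_of_trivial, hQsymm]
  have hself : L = LinearMap.adjoint L := by
    rw [hL, ← Matrix.toEuclideanLin_conjTranspose_eq_adjoint, hQH]
  have hadj : ∀ x z : EuclideanSpace ℝ (Fin n), ⟪L x, z⟫_ℝ = ⟪x, L z⟫_ℝ := by
    intro x z
    calc ⟪L x, z⟫_ℝ = ⟪LinearMap.adjoint L x, z⟫_ℝ := by rw [← hself]
      _ = ⟪x, L z⟫_ℝ := LinearMap.adjoint_inner_left L z x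
  set d := h₁ - h₂ with hd
  have hLd : ⟪d, L d⟫_ℝ = ⟪L d, L d⟫_ℝ := by
    have h1 : ⟪L d, L d⟫_ℝ = ⟪d, L (L d)⟫_ℝ := hadj d (L d)
    have h2 : L (L d) = L d := by
      simp only [hL, Matrix.toEuclideanLin_apply, Equiv.apply_symm_apply,
        Matrix.mulVec_mulVec, hQQ]
    rw [h1, h2]
  have hdiff : fLE h₁ - fLE h₂ = d - η • L d := by
    rw [hfLE, hfLE]
    have hcomp : ∀ x : EuclideanSpace ℝ (Fin n),
        Matrix.toEuclideanLin (Mᵀ * B) (Matrix.toEuclideanLin M x) = L x := by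
      intro x
      rw [hL, Matrix.toEuclideanLin_apply, Matrix.toEuclideanLin_apply,
        Matrix.toEuclideanLin_apply]
      simp [Matrix.mulVec_mulVec, hQ]
    have : Matrix.toEuclideanLin (Mᵀ * B) (y - Matrix.toEuclideanLin M h₁)
        - Matrix.toEuclideanLin (Mᵀ * B) (y - Matrix.toEuclideanLin M h₂)
        = - L d := by
      rw [← map_sub]
      have : (y - Matrix.toEuclideanLin M h₁) - (y - Matrix.toEuclideanLin M h₂)
          = - Matrix.toEuclideanLin M d := by
        rw [hd, map_sub]; abel
      rw [this, map_neg, hcomp]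
    calc h₁ + η • Matrix.toEuclideanLin (Mᵀ * B) (y - Matrix.toEuclideanLin M h₁)
          - (h₂ + η • Matrix.toEuclideanLin (Mᵀ * B) (y - Matrix.toEuclideanLin M h₂))
        = d + η • (Matrix.toEuclideanLin (Mᵀ * B) (y - Matrix.toEuclideanLin M h₁)
          - Matrix.toEuclideanLin (Mᵀ * B) (y - Matrix.toEuclideanLin M h₂)) := by
          rw [hd, smul_sub]; abel
      _ = d - η • L d := by rw [this, smul_neg]; abel
  rw [hdiff]
  have hnorm : ‖d - η • L d‖ ^ 2 ≤ ‖d‖ ^ 2 := by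
    have expand : ‖d - η • L d‖ ^ 2
        = ‖d‖ ^ 2 - 2 * ⟪d, η • L d⟫_ℝ + ‖η • L d‖ ^ 2 := by
      rw [@norm_sub_sq_real]
    rw [expand, real_inner_smul_right, norm_smul, mul_pow]
    have h3 : ‖L d‖ ^ 2 = ⟪d, L d⟫_ℝ := by
      rw [hLd, real_inner_self_eq_norm_sq]
    have h4 : (0:ℝ) ≤ ⟪d, L d⟫_ℝ := by rw [← h3]; positivity
    have h5 : ‖η‖ ^ 2 = η ^ 2 := by rw [Real.norm_eq_abs, sq_abs]
    rw [h5, h3]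
    nlinarith [mul_nonneg (mul_nonneg hη0 (by linarith : (0:ℝ) ≤ 2 - η)) h4]
  nlinarith [norm_nonneg (d - η • L d), norm_nonneg d]
end

section
/- Let M be a real m×n matrix with m < n such that M Mᵀ is invertible, let M† = Mᵀ (M Mᵀ)⁻¹ be its Moore–Penrose pseudoinverse, fix y ∈ ℝ^m and a real number η with 0 ≤ η ≤ 2, and let f_LE(h) = h + η M†(y − M h) be the linear estimator. Let f_NLE : ℝ^n → ℝ^n be Lipschitz continuous with Lipschitz constant L where 0 ≤ L < 1, and set f = f_NLE ∘ f_LE. Then f has a unique fixed point h* ∈ ℝ^n (h* = f(h*)), and for any initial point h⁰ ∈ ℝ^n, the sequence defined by hᵗ⁺¹ = f(hᵗ) converges to h* at a linear rate: ‖hᵗ − h*‖₂ ≤ Lᵗ ‖h⁰ − h*‖₂ for all t ∈ ℕ. -/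
open scoped RealInnerProductSpace


open Matrix

section Aux

variable {m n : ℕ}

lemma toEuclideanLin_mul_apply (A : Matrix (Fin m) (Fin n) ℝ) (B : Matrix (Fin n) (Fin m) ℝ)
    (v : EuclideanSpace ℝ (Fin m)) :
    Matrix.toEuclideanLin (A * B) v
      = Matrix.toEuclideanLin A (Matrix.toEuclideanLin B v) := by
  simp [Matrix.toEuclideanLin_apply, Matrix.mulVec_mulVec]

end Aux

/-- **Theorem 1 (linear convergence of FPN-OAMP).** If `f_NLE` is an `L`-contraction
(`0 ≤ L < 1`) and `f_LE(h) = h + η M†(y − M h)` is the pseudo-inverse linear estimator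
(`0 ≤ η ≤ 2`), then `f = f_NLE ∘ f_LE` has a unique fixed point `h*`, and from any
initial point the iterates `hᵗ⁺¹ = f(hᵗ)` converge to `h*` linearly with rate `L`. -/
theorem fpn_oamp_linear_convergence {m n : ℕ} (hmn : m < n)
    (M : Matrix (Fin m) (Fin n) ℝ) (hinv : IsUnit (M * Mᵀ))
    (y : EuclideanSpace ℝ (Fin m)) (η : ℝ) (hη0 : 0 ≤ η) (hη2 : η ≤ 2)
    (fLE fNLE : EuclideanSpace ℝ (Fin n) → EuclideanSpace ℝ (Fin n))
    (hfLE : ∀ h, fLE h = h + η • (Matrix.toEuclideanLin (Mᵀ * (M * Mᵀ)⁻¹)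
        (y - Matrix.toEuclideanLin M h)))
    (L : ℝ) (hL0 : 0 ≤ L) (hL1 : L < 1)
    (hNLE : ∀ h₁ h₂ : EuclideanSpace ℝ (Fin n), ‖fNLE h₁ - fNLE h₂‖ ≤ L * ‖h₁ - h₂‖) :
    ∃ hstar : EuclideanSpace ℝ (Fin n),
      (fNLE ∘ fLE) hstar = hstar ∧
      (∀ h' : EuclideanSpace ℝ (Fin n), (fNLE ∘ fLE) h' = h' → h' = hstar) ∧
      (∀ h0 : EuclideanSpace ℝ (Fin n), ∀ t : ℕ,
        ‖(fNLE ∘ fLE)^[t] h0 - hstar‖ ≤ L ^ t * ‖h0 - hstar‖) := by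
  -- the projection matrix
  set Q : Matrix (Fin n) (Fin n) ℝ := Mᵀ * (M * Mᵀ)⁻¹ * M with hQ
  have hdet : IsUnit (M * Mᵀ).det := (Matrix.isUnit_iff_isUnit_det _).mp hinv
  have hQsymm : Qᵀ = Q := by
    rw [hQ, Matrix.transpose_mul, Matrix.transpose_mul, Matrix.transpose_nonsing_inv,
      Matrix.transpose_mul, Matrix.transpose_transpose, Matrix.mul_assoc]
  have hQidem : Q * Q = Q := by
    have : (M * Mᵀ)⁻¹ * (M * Mᵀ) = 1 := Matrix.nonsing_inv_mul _ hdet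
    calc Q * Q = Mᵀ * (((M * Mᵀ)⁻¹ * (M * Mᵀ)) * ((M * Mᵀ)⁻¹ * M)) := by
          rw [hQ]; simp only [Matrix.mul_assoc]
      _ = Q := by rw [this, Matrix.one_mul, hQ, Matrix.mul_assoc]
  set P : EuclideanSpace ℝ (Fin n) →ₗ[ℝ] EuclideanSpace ℝ (Fin n) :=
    Matrix.toEuclideanLin Q with hP
  have hPadj : ∀ v w : EuclideanSpace ℝ (Fin n), ⟪P v, w⟫ = ⟪v, P w⟫ := by
    intro v w
    have h1 : Matrix.toEuclideanLin Qᴴ = LinearMap.adjoint (Matrix.toEuclideanLin Q) :=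
      Matrix.toEuclideanLin_conjTranspose_eq_adjoint Q
    have h2 : Qᴴ = Q := by
      rw [Matrix.conjTranspose_eq_transpose_of_trivial]; exact hQsymm
    rw [hP, ← LinearMap.adjoint_inner_left, ← h1, h2]
  have hPP : ∀ v, P (P v) = P v := by
    intro v
    rw [hP, ← toEuclideanLin_mul_apply, hQidem]
  -- inner product identity
  have hinner : ∀ v : EuclideanSpace ℝ (Fin n), ⟪v, P v⟫ = ‖P v‖ ^ 2 := by
    intro v
    have : ⟪v, P (P v)⟫ = ⟪P v, P v⟫ := (hPadj v (P v)).symm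
    rw [hPP] at this
    rw [this, real_inner_self_eq_norm_sq]
  -- fLE is 1-Lipschitz
  have hLE : ∀ h₁ h₂ : EuclideanSpace ℝ (Fin n), ‖fLE h₁ - fLE h₂‖ ≤ ‖h₁ - h₂‖ := by
    intro h₁ h₂
    have hdiff : fLE h₁ - fLE h₂ = (h₁ - h₂) - η • P (h₁ - h₂) := by
      rw [hfLE h₁, hfLE h₂, hP, hQ, toEuclideanLin_mul_apply]
      simp only [map_sub]
      module
    rw [hdiff]
    set v := h₁ - h₂ with hv
    have hPv : ‖P v‖ ^ 2 ≥ 0 := sq_nonneg _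
    have hnorm : ‖v - η • P v‖ ^ 2 = ‖v‖ ^ 2 + η * (η - 2) * ‖P v‖ ^ 2 := by
      rw [@norm_sub_sq_real, real_inner_smul_right, norm_smul, hinner]
      have : ‖η‖ = η := abs_of_nonneg hη0
      rw [this, mul_pow]
      ring
    have hle2 : ‖v - η • P v‖ ^ 2 ≤ ‖v‖ ^ 2 := by
      rw [hnorm]
      nlinarith [mul_nonneg (mul_nonneg hη0 (by linarith : (0:ℝ) ≤ 2 - η)) hPv]
    nlinarith [norm_nonneg (v - η • P v), norm_nonneg v]
  -- f is an L-contraction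
  set f : EuclideanSpace ℝ (Fin n) → EuclideanSpace ℝ (Fin n) := fNLE ∘ fLE with hf
  have hcontr : ∀ a b, ‖f a - f b‖ ≤ L * ‖a - b‖ := by
    intro a b
    calc ‖f a - f b‖ ≤ L * ‖fLE a - fLE b‖ := hNLE _ _
      _ ≤ L * ‖a - b‖ := by
        exact mul_le_mul_of_nonneg_left (hLE a b) hL0
  have hK : ContractingWith ⟨L, hL0⟩ f := by
    constructor
    · exact_mod_cast hL1
    · apply LipschitzWith.of_dist_le_mul
      intro a b
      simp only [dist_eq_norm]; exact hcontr a b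
  refine ⟨hK.fixedPoint f, hK.fixedPoint_isFixedPt, ?_, ?_⟩
  · intro h' hh'
    set hs := hK.fixedPoint f with hhs
    have hfix : f hs = hs := hK.fixedPoint_isFixedPt
    have h1 : ‖h' - hs‖ ≤ L * ‖h' - hs‖ := by
      calc ‖h' - hs‖ = ‖f h' - f hs‖ := by rw [hh', hfix]
        _ ≤ L * ‖h' - hs‖ := hcontr _ _
    have : ‖h' - hs‖ ≤ 0 := by nlinarith [norm_nonneg (h' - hs)]
    have : h' - hs = 0 := by
      rwa [← norm_le_zero_iff]
    linear_combination (norm := module) this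
  · intro h0 t
    induction t with
    | zero => simp
    | succ t ih =>
      have hfix : f (hK.fixedPoint f) = hK.fixedPoint f := hK.fixedPoint_isFixedPt
      calc ‖f^[t+1] h0 - hK.fixedPoint f‖
          = ‖f (f^[t] h0) - f (hK.fixedPoint f)‖ := by
            rw [Function.iterate_succ_apply', hfix]
        _ ≤ L * ‖f^[t] h0 - hK.fixedPoint f‖ := hcontr _ _
        _ ≤ L * (L ^ t * ‖h0 - hK.fixedPoint f‖) :=
            mul_le_mul_of_nonneg_left ih hL0
        _ = L ^ (t+1) * ‖h0 - hK.fixedPoint f‖ := by ring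
end
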